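/- arXiv:1404.0848 — 4 statements merged into one kernel-verified Lean document; each statement's English description precedes it below -/
import Mathlib

section
/- Soundness of the ⊥ verdict for broken structural substitutability: assume the LTS S_A is deterministic. If some pair (c_R, c_A) in the lock-step reachable set Reach of (c_R⁰, c_A⁰) violates the structural substitutability predicate, i.e. ¬ subst c_R c_A, then no substitutability simulation ρ (a relation satisfying clauses (0), (i) and (ii)) can relate c_R⁰ to c_A⁰. -/
/-!
Soundness of the ⊥ verdict for broken structural substitutability.
-/

variable {CR CA L : Type*}

/-- Clause (0): structural substitutability. -/
def Clause0 (subst : CR → CA → Prop) (ρ : CR → CA → Prop) : Prop :=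
  ∀ cR cA, ρ cR cA → subst cR cA

/-- The strict-simulation clause (i). -/
def ClauseI (stepR : CR → L → CR → Prop) (stepA : CA → L → CA → Prop)
    (RR RA : Set L) (ρ : CR → CA → Prop) : Prop :=
  ∀ cR cA, ρ cR cA → ∀ ope ∈ RR ∩ RA, ∀ cR', stepR cR ope cR' →
    ∃ cA', stepA cA ope cA' ∧ ρ cR' cA'

/-- The stuttering clause (ii). -/
def ClauseII (stepR : CR → L → CR → Prop)
    (RR RA : Set L) (ρ : CR → CA → Prop) : Prop :=
  ∀ cR cA, ρ cR cA → ∀ ope' ∈ RR \ RA, ∀ cR', stepR cR ope' cR' → ρ cR' cA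

/-- Determinism of an LTS. -/
def Deterministic (step : CA → L → CA → Prop) : Prop :=
  ∀ c ope c₁ c₂, step c ope c₁ → step c ope c₂ → c₁ = c₂

/-- The lock-step reachable set of `(cR0, cA0)`. -/
inductive Reach (stepR : CR → L → CR → Prop) (stepA : CA → L → CA → Prop)
    (RR RA : Set L) (cR0 : CR) (cA0 : CA) : CR → CA → Prop
  | init : Reach stepR stepA RR RA cR0 cA0 cR0 cA0
  | shared {cR cA cR' cA' ope} : Reach stepR stepA RR RA cR0 cA0 cR cA →
      ope ∈ RR ∩ RA → stepR cR ope cR' → stepA cA ope cA' →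
      Reach stepR stepA RR RA cR0 cA0 cR' cA'
  | new {cR cA cR' ope'} : Reach stepR stepA RR RA cR0 cA0 cR cA →
      ope' ∈ RR \ RA → stepR cR ope' cR' →
      Reach stepR stepA RR RA cR0 cA0 cR' cA

theorem bot_sound_broken_subst
    (stepR : CR → L → CR → Prop) (stepA : CA → L → CA → Prop)
    (RR RA : Set L) (subst : CR → CA → Prop)
    (hdet : Deterministic stepA)
    (cR0 : CR) (cA0 : CA) (cR : CR) (cA : CA)
    (hreach : Reach stepR stepA RR RA cR0 cA0 cR cA)
    (hviol : ¬ subst cR cA) :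
    ∀ ρ : CR → CA → Prop,
      Clause0 subst ρ → ClauseI stepR stepA RR RA ρ → ClauseII stepR RR RA ρ →
      ¬ ρ cR0 cA0 := by
  intro ρ h0 hI hII h00
  refine hviol (h0 _ _ ?_)
  clear hviol
  induction hreach with
  | init => exact h00
  | shared hr hm hsR hsA ih =>
      obtain ⟨cA'', hsA'', hρ⟩ := hI _ _ ih _ hm _ hsR
      exact hdet _ _ _ _ hsA'' hsA ▸ hρ
  | new hr hm hsR ih => exact hII _ _ ih _ hm _ hsR
end

section
/- Soundness of the ⊥ verdict for introduced deadlocks: assume the LTS S_A is deterministic. If some pair (c_R, c_A) in the lock-step reachable set Reach of (c_R⁰, c_A⁰) is such that c_R is a deadlock of S_R (no outgoing transition with any label of R_R) while c_A is not a deadlock of S_A (it has some outgoing transition with a label of R_A), then no relation ρ satisfying the strict-simulation clause (i), the stuttering clause (ii) and the no-new-deadlock clause (iv) relates c_R⁰ to c_A⁰. -/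
/-!
Soundness of the ⊥ verdict for introduced deadlocks.
-/

variable {CR CA L : Type*}

/-- A configuration is a deadlock if it has no outgoing transition with any
label of the LTS's label set. -/
def DeadlockOf {C : Type*} (step : C → L → C → Prop) (R : Set L) (c : C) : Prop :=
  ∀ ope ∈ R, ∀ c', ¬ step c ope c'

/-- The no-new-deadlock clause (iv). -/
def ClauseIV (stepR : CR → L → CR → Prop) (stepA : CA → L → CA → Prop)
    (RR RA : Set L) (ρ : CR → CA → Prop) : Prop :=
  ∀ cR cA, ρ cR cA → DeadlockOf stepR RR cR → DeadlockOf stepA RA cA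

theorem bot_sound_new_deadlock
    (stepR : CR → L → CR → Prop) (stepA : CA → L → CA → Prop)
    (RR RA : Set L)
    (hdet : Deterministic stepA)
    (cR0 : CR) (cA0 : CA) (cR : CR) (cA : CA)
    (hreach : Reach stepR stepA RR RA cR0 cA0 cR cA)
    (hRdead : DeadlockOf stepR RR cR)
    (hAlive : ¬ DeadlockOf stepA RA cA) :
    ∀ ρ : CR → CA → Prop,
      ClauseI stepR stepA RR RA ρ → ClauseII stepR RR RA ρ →
      ClauseIV stepR stepA RR RA ρ →
      ¬ ρ cR0 cA0 := by
  intro ρ hI hII hIV h0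
  have hρ : ρ cR cA := by
    clear hRdead hAlive
    induction hreach with
    | init => exact h0
    | shared hr hmem hsR hsA ih =>
        obtain ⟨cA'', hsA'', hρ'⟩ := hI _ _ ih _ hmem _ hsR
        rwa [hdet _ _ _ _ hsA'' hsA] at hρ'
    | new hr hmem hsR ih => exact hII _ _ ih _ hmem _ hsR
  exact hAlive (hIV _ _ hρ hRdead)
end

section
/- Soundness of the ⊥ verdict for a non-matchable old reconfiguration: assume the LTS S_A is deterministic. If some pair (c_R, c_A) in the lock-step reachable set Reach of (c_R⁰, c_A⁰) is such that for some shared label ope ∈ R_R ∩ R_A there is a transition c_R →[ope] c_R' in S_R while there is no c_A' with c_A →[ope] c_A' in S_A, then no relation ρ satisfying the strict-simulation clause (i) and the stuttering clause (ii) relates c_R⁰ to c_A⁰. -/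
/-!
Soundness of the ⊥ verdict for a non-matchable old reconfiguration.
-/

variable {CR CA L : Type*}

theorem bot_sound_unmatchable_old
    (stepR : CR → L → CR → Prop) (stepA : CA → L → CA → Prop)
    (RR RA : Set L)
    (hdet : Deterministic stepA)
    (cR0 : CR) (cA0 : CA) (cR : CR) (cA : CA)
    (hreach : Reach stepR stepA RR RA cR0 cA0 cR cA)
    (ope : L) (hope : ope ∈ RR ∩ RA)
    (cR' : CR) (hstepR : stepR cR ope cR')
    (hnoA : ¬ ∃ cA', stepA cA ope cA') :
    ∀ ρ : CR → CA → Prop,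
      ClauseI stepR stepA RR RA ρ → ClauseII stepR RR RA ρ →
      ¬ ρ cR0 cA0 := by
  intro ρ h1 h2 h0
  have key : ∀ cR cA, Reach stepR stepA RR RA cR0 cA0 cR cA → ρ cR cA := by
    intro cR cA hreach
    induction hreach with
    | init => exact h0
    | shared hr hmem hsR hsA ih =>
        obtain ⟨cA'', hsA'', hρ⟩ := h1 _ _ ih _ hmem _ hsR
        rwa [hdet _ _ _ _ hsA hsA'']
    | new hr hmem hsR ih => exact h2 _ _ ih _ hmem _ hsR
  obtain ⟨cA', hsA', _⟩ := h1 _ _ (key _ _ hreach) _ hope _ hstepR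
  exact hnoA ⟨cA', hsA'⟩
end

section
/- Deadlocked abstract configurations block all old reconfigurations: let ρ be a relation satisfying the strict-simulation clause (i) and the stuttering clause (ii), suppose ρ c_R⁰ c_A⁰, and suppose c_A⁰ is a deadlock of S_A (no outgoing transition with any label of R_A). Then no configuration c_R reachable from c_R⁰ in S_R by a finite sequence of transitions labelled only with new labels (labels in R_R \ R_A) can perform a transition with a shared label: for every such c_R, every ope ∈ R_R ∩ R_A and every c_R', it is not the case that c_R →[ope] c_R'. -/
/-!
Deadlocked abstract configurations block all old reconfigurations.
-/

variable {CR CA L : Type*}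

/-- One step of the refined system using only a new label (in `RR \ RA`). -/
def NewStep (stepR : CR → L → CR → Prop) (RR RA : Set L) (c c' : CR) : Prop :=
  ∃ ope' ∈ RR \ RA, stepR c ope' c'

theorem deadlocked_abstract_blocks_old
    (stepR : CR → L → CR → Prop) (stepA : CA → L → CA → Prop)
    (RR RA : Set L)
    (ρ : CR → CA → Prop)
    (hI : ClauseI stepR stepA RR RA ρ)
    (hII : ClauseII stepR RR RA ρ)
    (cR0 : CR) (cA0 : CA) (h0 : ρ cR0 cA0)
    (hdead : DeadlockOf stepA RA cA0) :
    ∀ cR : CR, Relation.ReflTransGen (NewStep stepR RR RA) cR0 cR →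
      ∀ ope ∈ RR ∩ RA, ∀ cR' : CR, ¬ stepR cR ope cR' := by
  intro cR hreach
  have hρ : ρ cR cA0 := by
    induction hreach with
    | refl => exact h0
    | tail _ hstep ih =>
      obtain ⟨ope', hmem, hs⟩ := hstep
      exact hII _ _ ih ope' hmem _ hs
  intro ope hmem cR' hstep
  obtain ⟨cA', hA, _⟩ := hI _ _ hρ ope hmem _ hstep
  exact hdead ope hmem.2 cA' hA
end
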